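/- arXiv:2411.04972 — 2 statements merged into one kernel-verified Lean document; each statement's English description precedes it below -/
import Mathlib

section
/- Binary hashing lower bound: for probability distributions p, q on [n] and any α ∈ [0, 1/2], if S ⊆ [n] is a uniformly random subset, then Pr[|p(S) − q(S)| ≥ α·‖p−q‖₂] ≥ (1/12)·(1 − 4α²)². -/
lemma cube_sum_succ {n : ℕ} (f : (Fin (n+1) → Bool) → ℝ) :
    ∑ ξ : Fin (n+1) → Bool, f ξ = ∑ b : Bool, ∑ ξ : Fin n → Bool, f (Fin.cons b ξ) := by
  rw [← (Fin.consEquiv fun _ => Bool).sum_comp f, Fintype.sum_prod_type]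
  rfl

lemma cube_const (n : ℕ) : ∑ _ξ : Fin n → Bool, ((1:ℝ)/2)^n = 1 := by
  rw [Finset.sum_const, Finset.card_univ, Fintype.card_fun]
  simp only [Fintype.card_bool, Fintype.card_fin, nsmul_eq_mul]
  push_cast
  rw [← mul_pow]
  norm_num

lemma cube_m2 (n : ℕ) (d : Fin n → ℝ) :
    ∑ ξ : Fin n → Bool, ((1:ℝ)/2)^n * (∑ i, (if ξ i then d i else -d i))^2
      = ∑ i, d i ^ 2 := by
  induction n with
  | zero => simp
  | succ n ih =>
    rw [cube_sum_succ]
    simp only [Fin.sum_univ_succ, Fin.cons_zero, Fin.cons_succ, Fintype.sum_bool,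
      if_true, if_false, Bool.false_eq_true]
    have key : ∀ ξ : Fin n → Bool,
        ((1:ℝ)/2)^(n+1) * (d 0 + ∑ i, (if ξ i then d i.succ else -d i.succ))^2
        + ((1:ℝ)/2)^(n+1) * (-d 0 + ∑ i, (if ξ i then d i.succ else -d i.succ))^2
        = ((1:ℝ)/2)^n * d 0 ^ 2
          + ((1:ℝ)/2)^n * (∑ i, (if ξ i then d i.succ else -d i.succ))^2 := by
      intro ξ; rw [pow_succ]; ring
    rw [← Finset.sum_add_distrib]
    simp only [key]
    rw [Finset.sum_add_distrib, ← Finset.sum_mul, cube_const, ih (fun i => d i.succ)]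
    ring

lemma cube_m4 (n : ℕ) (d : Fin n → ℝ) :
    ∑ ξ : Fin n → Bool, ((1:ℝ)/2)^n * (∑ i, (if ξ i then d i else -d i))^4
      = 3 * (∑ i, d i ^ 2)^2 - 2 * ∑ i, d i ^ 4 := by
  induction n with
  | zero => simp
  | succ n ih =>
    rw [cube_sum_succ]
    simp only [Fin.sum_univ_succ, Fin.cons_zero, Fin.cons_succ, Fintype.sum_bool,
      if_true, if_false, Bool.false_eq_true]
    have key : ∀ ξ : Fin n → Bool,
        ((1:ℝ)/2)^(n+1) * (d 0 + ∑ i, (if ξ i then d i.succ else -d i.succ))^4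
        + ((1:ℝ)/2)^(n+1) * (-d 0 + ∑ i, (if ξ i then d i.succ else -d i.succ))^4
        = ((1:ℝ)/2)^n * d 0 ^ 4
          + 6 * d 0 ^ 2 * (((1:ℝ)/2)^n * (∑ i, (if ξ i then d i.succ else -d i.succ))^2)
          + ((1:ℝ)/2)^n * (∑ i, (if ξ i then d i.succ else -d i.succ))^4 := by
      intro ξ; rw [pow_succ]; ring
    rw [← Finset.sum_add_distrib]
    simp only [key]
    rw [Finset.sum_add_distrib, Finset.sum_add_distrib, ← Finset.sum_mul,
      ← Finset.mul_sum, cube_const, cube_m2 n (fun i => d i.succ),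
      ih (fun i => d i.succ)]
    ring


lemma four_alpha_sq_le_one (α : ℝ) (hα0 : 0 ≤ α) (hα : α ≤ 1/2) : 4*α^2 ≤ 1 := by
  nlinarith [mul_nonneg (by linarith : (0:ℝ) ≤ 1 - 2*α) (by linarith : (0:ℝ) ≤ 1 + 2*α)]

lemma final_arith (S2 P α : ℝ) (hS2pos : 0 < S2)
    (hfin : ((1 - 4*α^2) * S2)^2 ≤ 3 * S2^2 * P) :
    1/12 * (1 - 4*α^2)^2 ≤ P := by
  have h1 : (1 - 4*α^2)^2 * S2^2 ≤ 3*P*S2^2 := by nlinarith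
  have h2 : (1 - 4*α^2)^2 ≤ 3*P := le_of_mul_le_mul_right h1 (by positivity : (0:ℝ) < S2^2)
  nlinarith [sq_nonneg (1 - 4*α^2)]

/-- Probability, over a uniformly random subset `S ⊆ [n]` (encoded by its indicator
`ξ : Fin n → Bool`, each element included independently with probability 1/2),
of the event `E`. -/
noncomputable def randSubsetProb (n : ℕ) (E : (Fin n → Bool) → Prop)
    [DecidablePred E] : ℝ :=
  ∑ ξ : Fin n → Bool, ((1 : ℝ) / 2) ^ n * (if E ξ then 1 else 0)

theorem stmt_12 (n : ℕ) (p q : Fin n → ℝ)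
    (hp : ∀ i, 0 ≤ p i) (hp1 : ∑ i, p i = 1)
    (hq : ∀ i, 0 ≤ q i) (hq1 : ∑ i, q i = 1)
    (α : ℝ) (hα0 : 0 ≤ α) (hα : α ≤ 1 / 2) :
    (1 / 12) * (1 - 4 * α ^ 2) ^ 2
      ≤ randSubsetProb n (fun ξ =>
          α * Real.sqrt (∑ i, (p i - q i) ^ 2)
            ≤ |∑ i, (if ξ i then p i - q i else 0)|) := by
  classical
  set d : Fin n → ℝ := fun i => p i - q i with hd
  have hT : ∑ i, d i = 0 := by
    simp only [hd, Finset.sum_sub_distrib, hp1, hq1, sub_self]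
  set S2 : ℝ := ∑ i, d i ^ 2 with hS2
  have hS2nn : 0 ≤ S2 := Finset.sum_nonneg fun i _ => sq_nonneg _
  set c : ℝ := ((1:ℝ)/2)^n with hc
  have hcnn : 0 ≤ c := by positivity
  set Z : (Fin n → Bool) → ℝ := fun ξ => ∑ i, (if ξ i then d i else 0) with hZ
  set Y : (Fin n → Bool) → ℝ := fun ξ => ∑ i, (if ξ i then d i else -d i) with hY
  have hYZ : ∀ ξ, Y ξ = 2 * Z ξ := by
    intro ξ
    have : Y ξ = ∑ i, (2 * (if ξ i then d i else 0) - d i) := by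
      refine Finset.sum_congr rfl fun i _ => ?_
      by_cases h : ξ i <;> simp [h] <;> ring
    rw [this, Finset.sum_sub_distrib, ← Finset.mul_sum, hT]
    ring
  set E : (Fin n → Bool) → Prop := fun ξ => α * Real.sqrt S2 ≤ |Z ξ| with hE
  have hgoal : randSubsetProb n (fun ξ =>
          α * Real.sqrt (∑ i, (p i - q i) ^ 2)
            ≤ |∑ i, (if ξ i then p i - q i else 0)|)
      = ∑ ξ : Fin n → Bool, (if E ξ then c else 0) := by
    rw [randSubsetProb]
    refine Finset.sum_congr rfl fun ξ _ => ?_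
    by_cases h : E ξ
    · rw [if_pos h, if_pos h, mul_one]
    · rw [if_neg h, if_neg h, mul_zero]
  rw [hgoal]
  set A : Finset (Fin n → Bool) := Finset.univ.filter E with hA
  have hPA : ∑ ξ : Fin n → Bool, (if E ξ then c else 0) = ∑ ξ ∈ A, c := by
    rw [hA, Finset.sum_filter]
  rw [hPA]
  set P : ℝ := ∑ ξ ∈ A, c with hP
  have hPnn : 0 ≤ P := Finset.sum_nonneg fun _ _ => hcnn
  have hP1 : P ≤ 1 := by
    rw [hP, ← cube_const n]
    exact Finset.sum_le_sum_of_subset_of_nonneg (Finset.filter_subset _ _)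
      (fun _ _ _ => hcnn)
  by_cases hS0 : S2 = 0
  · -- p = q on squares: event always true
    have hev : ∀ ξ, E ξ := by
      intro ξ
      rw [hE]
      simp only [hS0, Real.sqrt_zero, mul_zero]
      exact abs_nonneg _
    have hP1' : P = 1 := by
      rw [hP, hA, Finset.filter_true_of_mem (fun ξ _ => hev ξ)]
      exact cube_const n
    rw [hP1']
    nlinarith [sq_nonneg α, sq_nonneg (1 - 4*α^2), four_alpha_sq_le_one α hα0 hα]
  · have hS2pos : 0 < S2 := lt_of_le_of_ne hS2nn (Ne.symm hS0)
    have h1 : ∑ ξ : Fin n → Bool, c * (Y ξ)^2 = S2 := cube_m2 n d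
    have h2 : ∑ ξ : Fin n → Bool, c * (Y ξ)^4 ≤ 3 * S2^2 := by
      rw [cube_m4 n d]
      have : 0 ≤ ∑ i, d i ^ 4 := Finset.sum_nonneg fun i _ => by positivity
      rw [← hS2]
      linarith
    -- split
    have hsplit : (∑ ξ ∈ A, c * (Y ξ)^2)
        + (∑ ξ ∈ Finset.univ.filter (fun ξ => ¬ E ξ), c * (Y ξ)^2) = S2 := by
      have hs := Finset.sum_filter_add_sum_filter_not Finset.univ E (fun ξ => c * (Y ξ)^2)
      rw [h1] at hs
      exact hs
    -- bound on complement
    have hcomp : ∑ ξ ∈ Finset.univ.filter (fun ξ => ¬ E ξ), c * (Y ξ)^2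
        ≤ 4 * α^2 * S2 := by
      have step1 : ∀ ξ ∈ Finset.univ.filter (fun ξ => ¬ E ξ),
          c * (Y ξ)^2 ≤ c * (4 * α^2 * S2) := by
        intro ξ hξ
        rw [Finset.mem_filter] at hξ
        have hlt : |Z ξ| ≤ α * Real.sqrt S2 := le_of_lt (not_le.mp hξ.2)
        have hZ2 : (Z ξ)^2 ≤ α^2 * S2 := by
          have := mul_self_le_mul_self (abs_nonneg (Z ξ)) hlt
          calc (Z ξ)^2 = |Z ξ| * |Z ξ| := by rw [← sq_abs]; ring
            _ ≤ (α * Real.sqrt S2) * (α * Real.sqrt S2) := this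
            _ = α^2 * (Real.sqrt S2 * Real.sqrt S2) := by ring
            _ = α^2 * S2 := by rw [Real.mul_self_sqrt hS2nn]
        have : (Y ξ)^2 ≤ 4 * α^2 * S2 := by
          rw [hYZ ξ]; nlinarith
        exact mul_le_mul_of_nonneg_left this hcnn
      calc ∑ ξ ∈ Finset.univ.filter (fun ξ => ¬ E ξ), c * (Y ξ)^2
          ≤ ∑ ξ ∈ Finset.univ.filter (fun ξ => ¬ E ξ), c * (4 * α^2 * S2) :=
            Finset.sum_le_sum step1
        _ ≤ ∑ _ξ : Fin n → Bool, c * (4 * α^2 * S2) :=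
            Finset.sum_le_sum_of_subset_of_nonneg (Finset.filter_subset _ _)
              (fun _ _ _ => by positivity)
        _ = 4 * α^2 * S2 := by
            rw [← Finset.sum_mul, cube_const n, one_mul]
    have hlow : (1 - 4*α^2) * S2 ≤ ∑ ξ ∈ A, c * (Y ξ)^2 := by nlinarith
    -- Cauchy–Schwarz on A
    have hCS : (∑ ξ ∈ A, c * (Y ξ)^2)^2 ≤ (∑ ξ ∈ A, c * (Y ξ)^4) * P := by
      have := Finset.sum_mul_sq_le_sq_mul_sq A
        (fun ξ => Real.sqrt c * (Y ξ)^2) (fun ξ => Real.sqrt c)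
      have e1 : ∀ ξ, (Real.sqrt c * (Y ξ)^2) * Real.sqrt c = c * (Y ξ)^2 := by
        intro ξ
        rw [show (Real.sqrt c * (Y ξ)^2) * Real.sqrt c
            = (Real.sqrt c * Real.sqrt c) * (Y ξ)^2 by ring, Real.mul_self_sqrt hcnn]
      have e2 : ∀ ξ, (Real.sqrt c * (Y ξ)^2)^2 = c * (Y ξ)^4 := by
        intro ξ
        rw [mul_pow, Real.sq_sqrt hcnn]
        ring
      have e3 : (Real.sqrt c)^2 = c := Real.sq_sqrt hcnn
      simp only [e1, e2, e3] at this
      rw [hP]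
      exact this
    have hA4 : ∑ ξ ∈ A, c * (Y ξ)^4 ≤ 3 * S2^2 := by
      refine le_trans (Finset.sum_le_sum_of_subset_of_nonneg
        (Finset.filter_subset _ _) (fun ξ _ _ => by positivity)) h2
    have hfinal : ((1 - 4*α^2) * S2)^2 ≤ 3 * S2^2 * P := by
      have h0 : 0 ≤ (1 - 4*α^2) * S2 :=
        mul_nonneg (by linarith [four_alpha_sq_le_one α hα0 hα]) hS2nn
      have hsq : ((1 - 4*α^2) * S2)^2 ≤ (∑ ξ ∈ A, c * (Y ξ)^2)^2 :=
        pow_le_pow_left₀ h0 hlow 2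
      calc ((1 - 4*α^2) * S2)^2 ≤ (∑ ξ ∈ A, c * (Y ξ)^2)^2 := hsq
        _ ≤ (∑ ξ ∈ A, c * (Y ξ)^4) * P := hCS
        _ ≤ 3 * S2^2 * P := by
            exact mul_le_mul_of_nonneg_right hA4 hPnn
    exact final_arith S2 P α hS2pos hfinal
end

section
/- Let X₁,…,X_N be i.i.d. samples from a distribution p on [n] and Z := ∑_{1≤i<j≤N} 1[Xᵢ = Xⱼ]. Then Var[Z] = C(N,2)·‖p‖₂²·(1 − ‖p‖₂²) + 6·C(N,3)·(‖p‖₃³ − ‖p‖₂⁴). -/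
/-- Expectation of `f` under `N` i.i.d. draws from the pmf `p` on `Fin n`. -/
noncomputable def iidExp (n N : ℕ) (p : Fin n → ℝ) (f : (Fin N → Fin n) → ℝ) : ℝ :=
  ∑ X : Fin N → Fin n, (∏ t, p (X t)) * f X

/-- Number of colliding pairs among the samples `X`. -/
def collisions (n N : ℕ) (X : Fin N → Fin n) : ℝ :=
  ∑ i : Fin N, ∑ j : Fin N, if i < j ∧ X i = X j then 1 else 0

/-!
Write `Z = ∑ₛ 1[X is constant on s]` over the two-element sets `s` of sample indices, so that
`Var Z = ∑_{s,t} Cov(1ₛ, 1ₜ)`. By independence the covariance vanishes when `s` and `t` are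
disjoint; otherwise `1ₛ 1ₜ = 1_{s ∪ t}` has mean `∑ₐ p a ^ #(s ∪ t)`, which gives
`‖p‖₃³ - ‖p‖₂⁴` when `s` and `t` share one index and `‖p‖₂² - ‖p‖₂⁴` when `s = t`. Since each
index lies in `N - 1` pairs, `∑ₜ #(s ∩ t) = 2 (N - 1)`, so each `s` meets `2 (N - 2)` other pairs
in one index; and `C(N,2) · 2 (N - 2) = 6 C(N,3)`.
-/

open Finset

section iidExp

variable {n N : ℕ} (p : Fin n → ℝ)

lemma iidExp_sum {ι : Type*} (s : Finset ι) (f : ι → (Fin N → Fin n) → ℝ) :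
    iidExp n N p (fun X => ∑ a ∈ s, f a X) = ∑ a ∈ s, iidExp n N p (f a) := by
  simp only [iidExp, mul_sum]
  exact sum_comm

noncomputable def iidCov (f g : (Fin N → Fin n) → ℝ) : ℝ :=
  iidExp n N p (fun X => f X * g X) - iidExp n N p f * iidExp n N p g

lemma iidExp_sq_sum_sub_sq {ι : Type*} (s : Finset ι) (f : ι → (Fin N → Fin n) → ℝ) :
    iidExp n N p (fun X => (∑ a ∈ s, f a X) ^ 2) - iidExp n N p (fun X => ∑ a ∈ s, f a X) ^ 2
      = ∑ a ∈ s, ∑ b ∈ s, iidCov p (f a) (f b) := by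
  simp only [iidCov, sq, sum_mul_sum, iidExp_sum, ← sum_sub_distrib]

lemma iidExp_prod_univ (g : Fin N → Fin n → ℝ) :
    iidExp n N p (fun X => ∏ t, g t (X t)) = ∏ t, ∑ a, p a * g t a := by
  rw [prod_univ_sum, Fintype.piFinset_univ]
  simp only [iidExp, prod_mul_distrib]

lemma iidExp_prod (hp1 : ∑ a, p a = 1) (S : Finset (Fin N)) (g : Fin N → Fin n → ℝ) :
    iidExp n N p (fun X => ∏ t ∈ S, g t (X t)) = ∏ t ∈ S, ∑ a, p a * g t a := by
  classical
  have h := iidExp_prod_univ p (fun t a => if t ∈ S then g t a else 1)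
  simpa only [apply_ite, mul_one, sum_ite_irrel, hp1, prod_ite_mem, univ_inter] using h

lemma iidExp_prod_mul_prod (hp1 : ∑ a, p a = 1) {S T : Finset (Fin N)} (hST : Disjoint S T)
    (g h : Fin N → Fin n → ℝ) :
    iidExp n N p (fun X => (∏ t ∈ S, g t (X t)) * ∏ t ∈ T, h t (X t))
      = iidExp n N p (fun X => ∏ t ∈ S, g t (X t))
        * iidExp n N p (fun X => ∏ t ∈ T, h t (X t)) := by
  classical
  have split : ∀ F G : Fin N → ℝ,
      ∏ t ∈ S ∪ T, (if t ∈ S then F t else G t) = (∏ t ∈ S, F t) * ∏ t ∈ T, G t := fun F G => by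
    rw [prod_union hST]
    congr 1 <;> refine prod_congr rfl fun t ht => ?_
    · rw [if_pos ht]
    · rw [if_neg (disjoint_right.mp hST ht)]
  have hprod := iidExp_prod p hp1 (S ∪ T) fun t x => if t ∈ S then g t x else h t x
  simp only [mul_ite, sum_ite_irrel, split] at hprod
  rw [hprod, iidExp_prod p hp1, iidExp_prod p hp1]

end iidExp

section coincide

variable {n N : ℕ}

def coincide (s : Finset (Fin N)) (X : Fin N → Fin n) : ℝ :=
  if ∃ a, ∀ t ∈ s, X t = a then 1 else 0

lemma coincide_pair (i j : Fin N) (X : Fin N → Fin n) :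
    coincide {i, j} X = if X i = X j then 1 else 0 :=
  if_congr ⟨fun ⟨_, h⟩ => (h i (by simp)).trans (h j (by simp)).symm,
    fun h => ⟨X j, by simp [h]⟩⟩ rfl rfl

lemma coincide_eq_sum_prod {s : Finset (Fin N)} (hs : s.Nonempty) (X : Fin N → Fin n) :
    coincide s X = ∑ a, ∏ t ∈ s, if X t = a then 1 else 0 := by
  obtain ⟨t₀, ht₀⟩ := hs
  rw [sum_eq_single (X t₀), prod_boole]
  · unfold coincide
    congr 1
    exact propext ⟨fun ⟨a, ha⟩ t ht => (ha t ht).trans (ha t₀ ht₀).symm, fun h => ⟨_, h⟩⟩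
  · intro b _ hb
    exact prod_eq_zero ht₀ (if_neg (Ne.symm hb))
  · simp

lemma coincide_mul_coincide {s t : Finset (Fin N)} (hst : (s ∩ t).Nonempty)
    (X : Fin N → Fin n) : coincide s X * coincide t X = coincide (s ∪ t) X := by
  obtain ⟨u, hu⟩ := hst
  rw [mem_inter] at hu
  unfold coincide
  rw [ite_zero_mul_ite_zero, one_mul]
  refine if_congr ⟨fun ⟨⟨a, ha⟩, ⟨b, hb⟩⟩ => ⟨a, fun x hx => ?_⟩, fun ⟨a, ha⟩ =>
    ⟨⟨a, fun x hx => ha x (mem_union_left _ hx)⟩, ⟨a, fun x hx => ha x (mem_union_right _ hx)⟩⟩⟩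
    rfl rfl
  rcases mem_union.mp hx with hx | hx
  · exact ha x hx
  · rw [hb x hx, ← hb u hu.2, ha u hu.1]

variable (p : Fin n → ℝ)

lemma iidExp_coincide (hp1 : ∑ a, p a = 1) {s : Finset (Fin N)} (hs : s.Nonempty) :
    iidExp n N p (coincide s) = ∑ a, p a ^ #s := by
  simp only [funext (coincide_eq_sum_prod hs), iidExp_sum]
  refine sum_congr rfl fun a _ => ?_
  rw [iidExp_prod p hp1 s fun _ x => if x = a then 1 else 0]
  simp

lemma iidExp_coincide_mul_of_disjoint (hp1 : ∑ a, p a = 1) {s t : Finset (Fin N)}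
    (hs : s.Nonempty) (ht : t.Nonempty) (hst : Disjoint s t) :
    iidExp n N p (fun X => coincide s X * coincide t X)
      = iidExp n N p (coincide s) * iidExp n N p (coincide t) := by
  simp only [funext (coincide_eq_sum_prod hs), funext (coincide_eq_sum_prod ht), sum_mul_sum,
    iidExp_sum]
  exact sum_congr rfl fun a _ => sum_congr rfl fun b _ => iidExp_prod_mul_prod p hp1 hst
    (fun _ x => if x = a then 1 else 0) fun _ x => if x = b then 1 else 0

lemma iidExp_coincide_mul_of_inter_nonempty (hp1 : ∑ a, p a = 1) {s t : Finset (Fin N)}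
    (hst : (s ∩ t).Nonempty) :
    iidExp n N p (fun X => coincide s X * coincide t X) = ∑ a, p a ^ #(s ∪ t) := by
  simp only [coincide_mul_coincide hst]
  exact iidExp_coincide p hp1 (hst.mono inter_subset_union)

end coincide

lemma card_inter_eq_one_of_card_eq_two {α : Type*} [DecidableEq α] {s t : Finset α}
    (hs : #s = 2) (ht : #t = 2) (hst : (s ∩ t).Nonempty) (hne : s ≠ t) : #(s ∩ t) = 1 := by
  have h_le : #(s ∩ t) ≤ 2 := hs ▸ card_le_card inter_subset_left
  have h_ne : #(s ∩ t) ≠ 2 := fun h =>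
    hne ((eq_of_subset_of_card_le inter_subset_left (hs ▸ h.ge)).symm.trans
      (eq_of_subset_of_card_le inter_subset_right (ht ▸ h.ge)))
  have := hst.card_pos
  omega

/-- The covariance is `0`, `‖p‖₃³ - ‖p‖₂⁴` or `‖p‖₂² - ‖p‖₂⁴` according as `s` and `t` are
disjoint, share one point, or are equal. -/
lemma iidCov_coincide_of_card_eq_two {n N : ℕ} (p : Fin n → ℝ) (hp1 : ∑ a, p a = 1)
    {s t : Finset (Fin N)} (hs : #s = 2) (ht : #t = 2) :
    iidCov p (coincide s) (coincide t)
      = (∑ a, p a ^ 3 - (∑ a, p a ^ 2) ^ 2) * #(s ∩ t)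
        + (∑ a, p a ^ 2 + (∑ a, p a ^ 2) ^ 2 - 2 * ∑ a, p a ^ 3) * if s = t then 1 else 0 := by
  have hs₀ : s.Nonempty := card_pos.mp (by omega)
  have ht₀ : t.Nonempty := card_pos.mp (by omega)
  rw [iidCov]
  by_cases hdisj : Disjoint s t
  · have hne : s ≠ t := fun h => hs₀.ne_empty (disjoint_self.mp (h ▸ hdisj))
    rw [iidExp_coincide_mul_of_disjoint p hp1 hs₀ ht₀ hdisj, sub_self,
      disjoint_iff_inter_eq_empty.mp hdisj, if_neg hne]
    simp
  have hst : (s ∩ t).Nonempty := not_disjoint_iff_nonempty_inter.mp hdisj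
  rw [iidExp_coincide_mul_of_inter_nonempty p hp1 hst, iidExp_coincide p hp1 hs₀,
    iidExp_coincide p hp1 ht₀, hs, ht]
  by_cases heq : s = t
  · subst heq
    simp only [union_self, inter_self, hs, if_true]
    push_cast
    ring
  · have h1 := card_inter_eq_one_of_card_eq_two hs ht hst heq
    have h3 : #(s ∪ t) = 3 := by have := card_union_add_card_inter s t; omega
    rw [h1, h3, if_neg heq]
    push_cast
    ring

lemma sum_card_inter_powersetCard {α : Type*} [DecidableEq α] {s u : Finset α} (hsu : s ⊆ u)
    {k : ℕ} (hk : 1 ≤ k) :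
    ∑ t ∈ powersetCard k u, #(s ∩ t) = #s * (#u - 1).choose (k - 1) := by
  have h : ∀ x ∈ s, #{t ∈ powersetCard k u | {x} ⊆ t} = (#u - 1).choose (k - 1) := fun x hx => by
    rw [card_filter_powersetCard_subset _ _ _ (singleton_subset_iff.mpr (hsu hx)) (by simpa),
      card_singleton]
  have hcard : ∀ t, #(s ∩ t) = ∑ x ∈ s, if x ∈ t then 1 else 0 := fun t => by
    rw [← filter_mem_eq_inter, card_filter]
  simp_rw [hcard]
  rw [sum_comm]
  simp_rw [card_filter, singleton_subset_iff] at h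
  rw [sum_congr rfl h, sum_const, smul_eq_mul]

lemma sum_powersetCard_two {α M : Type*} [LinearOrder α] [Fintype α] [AddCommMonoid M]
    (f : Finset α → M) :
    ∑ s ∈ powersetCard 2 univ, f s = ∑ i, ∑ j, if i < j then f {i, j} else 0 := by
  rw [← Fintype.sum_prod_type' (fun i j => if i < j then f {i, j} else 0), ← sum_filter]
  symm
  refine sum_bij (fun ij _ => {ij.1, ij.2}) (fun ij hij => ?_) (fun ij hij kl hkl h => ?_)
    (fun s hs => ?_) fun _ _ => rfl
  · rw [mem_filter] at hij
    exact mem_powersetCard.mpr ⟨subset_univ _, card_pair hij.2.ne⟩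
  · rw [mem_filter] at hij hkl
    have := congrArg ((↑) : Finset α → Set α) h
    simp only [coe_pair, Set.pair_eq_pair_iff] at this
    rcases this with ⟨h1, h2⟩ | ⟨h1, h2⟩
    · exact Prod.ext h1 h2
    · exact absurd (hij.2.trans (h1 ▸ h2 ▸ hkl.2)) (lt_irrefl _)
  · obtain ⟨x, y, hxy, rfl⟩ := card_eq_two.mp (mem_powersetCard.mp hs).2
    rcases hxy.lt_or_gt with h | h
    · exact ⟨(x, y), by simp [h], rfl⟩
    · exact ⟨(y, x), by simp [h], pair_comm y x⟩

lemma collisions_eq_sum_coincide {n N : ℕ} (X : Fin N → Fin n) :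
    collisions n N X = ∑ s ∈ powersetCard 2 univ, coincide s X := by
  simp only [sum_powersetCard_two, collisions, coincide_pair, ite_and]

lemma choose_two_mul_sub_one (N : ℕ) :
    N.choose 2 * (2 * (N - 1)) = 6 * N.choose 3 + 2 * N.choose 2 := by
  match N with
  | 0 | 1 => rfl
  | m + 2 =>
    have := Nat.choose_succ_right_eq (m + 2) 2
    simp only [Nat.add_sub_cancel] at this
    rw [show m + 2 - 1 = m + 1 by omega]
    linarith

theorem stmt_15_general (n N : ℕ) (p : Fin n → ℝ)
    (hp1 : ∑ i, p i = 1) :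
    iidExp n N p (fun X => (collisions n N X) ^ 2)
        - (iidExp n N p (collisions n N)) ^ 2
      = (N.choose 2 : ℝ) * (∑ i, (p i) ^ 2) * (1 - ∑ i, (p i) ^ 2)
          + 6 * (N.choose 3 : ℝ) * ((∑ i, (p i) ^ 3) - (∑ i, (p i) ^ 2) ^ 2) := by
  set P := powersetCard 2 (univ : Finset (Fin N))
  have hP : ∀ {s}, s ∈ P → #s = 2 := fun hs => (mem_powersetCard.mp hs).2
  have hrow : ∀ s ∈ P, ∑ t ∈ P, iidCov p (coincide s) (coincide t)
      = (∑ a, p a ^ 3 - (∑ a, p a ^ 2) ^ 2) * (2 * (N - 1) : ℕ)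
          + (∑ a, p a ^ 2 + (∑ a, p a ^ 2) ^ 2 - 2 * ∑ a, p a ^ 3) := fun s hs => by
    rw [sum_congr rfl fun t ht => iidCov_coincide_of_card_eq_two p hp1 (hP hs) (hP ht),
      sum_add_distrib, ← mul_sum, ← mul_sum, ← Nat.cast_sum,
      sum_card_inter_powersetCard (subset_univ s) one_le_two, sum_ite_eq P s, if_pos hs, hP hs,
      card_univ, Fintype.card_fin, mul_one]
    simp
  simp only [funext collisions_eq_sum_coincide]
  rw [iidExp_sq_sum_sub_sq, sum_congr rfl hrow, sum_const, card_powersetCard, card_univ,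
    Fintype.card_fin, nsmul_eq_mul]
  have hchoose := congrArg ((↑) : ℕ → ℝ) (choose_two_mul_sub_one N)
  push_cast at hchoose ⊢
  linear_combination (∑ a, p a ^ 3 - (∑ a, p a ^ 2) ^ 2) * hchoose

theorem stmt_15 (n N : ℕ) (p : Fin n → ℝ)
    (hp : ∀ i, 0 ≤ p i) (hp1 : ∑ i, p i = 1) :
    iidExp n N p (fun X => (collisions n N X) ^ 2)
        - (iidExp n N p (collisions n N)) ^ 2
      = (N.choose 2 : ℝ) * (∑ i, (p i) ^ 2) * (1 - ∑ i, (p i) ^ 2)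
          + 6 * (N.choose 3 : ℝ) * ((∑ i, (p i) ^ 3) - (∑ i, (p i) ^ 2) ^ 2) :=
  stmt_15_general n N p hp1
end
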